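/- If the token z_i is a leader, then it converges in finite time to a vertex of K: there exists k ∈ ℕ such that z_i^ℓ = z_i^k for all ℓ ≥ k and z_i^k is an extreme point of K. -/

import Mathlib

/-!
If `C_i^k = {i}`, the functional `y ↦ ⟪z_i^k, y⟫` attains its maximum over the tokens at time `k`
only at `z_i^k`, hence also over `co(Z^k)` only there. The leader does not move, and every other
token moves to a convex combination, with positive weight on its old position, of that position
and a point of `co(Z^k)`; so the strict inequalities, and with them the leadership, persist. Hence
`z_i` is eventually constant, lies in every `co(Z^ℓ)` (these decrease), and as the unique maximizer
of a linear functional on `co(Z^k) ⊇ K` it is an extreme point of `K`.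
-/

open scoped RealInnerProductSpace BigOperators Classical
open Filter Metric

noncomputable section

/-- The hardmax attention (argmax) index set `C_i` for a token configuration `z`
(attention matrix `A = I`): the set of indices `j` maximizing `⟪z_i, z_j⟫`. -/
def attn {d n : ℕ} (z : Fin n → EuclideanSpace ℝ (Fin d)) (i : Fin n) : Finset (Fin n) :=
  Finset.univ.filter fun j => (⟪z i, z j⟫ = ⨆ ℓ, ⟪z i, z ℓ⟫)

/-- The pure-attention hardmax transformer dynamics with step-size `α > 0` and `A = I`:
`z_i^{k+1} = z_i^k + (α/(1+α))·(1/|C_i^k|)·Σ_{j ∈ C_i^k} (z_j^k − z_i^k)`. -/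
def IsDyn {d n : ℕ} (α : ℝ) (z : ℕ → Fin n → EuclideanSpace ℝ (Fin d)) : Prop :=
  ∀ k i, z (k + 1) i = z k i +
    (α / (1 + α)) • (((attn (z k) i).card : ℝ)⁻¹ • ∑ j ∈ attn (z k) i, (z k j - z k i))

/-- The limiting set `K = ⋂ₖ co(Z^k)`, the intersection of the convex hulls of the token
configurations over all times. -/
def limitK {d n : ℕ} (z : ℕ → Fin n → EuclideanSpace ℝ (Fin d)) :
    Set (EuclideanSpace ℝ (Fin d)) :=
  ⋂ k, convexHull ℝ (Set.range (z k))

theorem le_of_mem_insert_setOf_lt {E β : Type*} [Preorder β] {f : E → β} {x u : E}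
    (hu : u ∈ insert x {y | f y < f x}) : f u ≤ f x := by
  rcases hu with rfl | hu
  exacts [le_rfl, le_of_lt hu]

section HalfSpace

variable {𝕜 E : Type*} [Field 𝕜] [LinearOrder 𝕜] [IsStrictOrderedRing 𝕜] [AddCommGroup E]
  [Module 𝕜 E] {l : E →ₗ[𝕜] 𝕜} {x u v : E} {a b : 𝕜}

theorem map_combo_lt_of_mem_insert_setOf_lt (hu : u ∈ insert x {y | l y < l x})
    (hv : v ∈ insert x {y | l y < l x}) (huv : ¬(u = x ∧ v = x)) (ha : 0 < a) (hb : 0 < b)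
    (hab : a + b = 1) : l (a • u + b • v) < l x := by
  have hx : a * l x + b * l x = l x := by rw [← add_mul, hab, one_mul]
  rw [map_add, map_smul, map_smul, smul_eq_mul, smul_eq_mul]
  rcases hu with rfl | hu
  · have hv : l v < l u := hv.resolve_left fun h => huv ⟨rfl, h⟩
    nlinarith
  · have hu : l u < l x := hu
    nlinarith [mul_le_mul_of_nonneg_left (le_of_mem_insert_setOf_lt hv) hb.le]

variable (l x)

theorem convex_insert_setOf_lt : Convex 𝕜 (insert x {y | l y < l x}) := by
  refine convex_iff_forall_pos.2 fun u hu v hv a b ha hb hab => ?_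
  by_cases huv : u = x ∧ v = x
  · left
    rw [huv.1, huv.2, ← add_smul, hab, one_smul]
  · exact .inr (map_combo_lt_of_mem_insert_setOf_lt hu hv huv ha hb hab)

variable {l x}

theorem convexHull_subset_insert_setOf_lt {s : Set E} (h : ∀ y ∈ s, y ≠ x → l y < l x) :
    convexHull 𝕜 s ⊆ insert x {y | l y < l x} :=
  convexHull_min (fun y hy => or_iff_not_imp_left.2 (h y hy)) (convex_insert_setOf_lt l x)

theorem mem_extremePoints_of_subset_insert_setOf_lt {A : Set E} (hx : x ∈ A)
    (hA : A ⊆ insert x {y | l y < l x}) : x ∈ A.extremePoints 𝕜 := by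
  refine mem_extremePoints_iff_left.2 ⟨hx, fun x₁ h₁ x₂ h₂ hseg => by_contra fun hne => ?_⟩
  obtain ⟨a, b, ha, hb, hab, hcomb⟩ := hseg
  have := map_combo_lt_of_mem_insert_setOf_lt (hA h₁) (hA h₂) (hne ·.1) ha hb hab
  rw [hcomb] at this
  exact this.false

end HalfSpace

theorem div_one_add_mem_Ico {α : ℝ} (hα : 0 ≤ α) : α / (1 + α) ∈ Set.Ico 0 1 :=
  ⟨by positivity, (div_lt_one (by positivity)).2 (lt_one_add α)⟩

section Attention

variable {d n : ℕ} {z : Fin n → EuclideanSpace ℝ (Fin d)} {i : Fin n}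

theorem mem_attn_iff {j : Fin n} : j ∈ attn z i ↔ ⟪z i, z j⟫ = ⨆ ℓ, ⟪z i, z ℓ⟫ := by
  simp [attn]

theorem inner_le_iSup_inner (j : Fin n) : ⟪z i, z j⟫ ≤ ⨆ ℓ, ⟪z i, z ℓ⟫ :=
  le_ciSup (f := fun ℓ => ⟪z i, z ℓ⟫) (Set.finite_range _).bddAbove j

theorem attn_eq_singleton_iff : attn z i = {i} ↔ ∀ j, j ≠ i → ⟪z i, z j⟫ < ⟪z i, z i⟫ := by
  constructor
  · intro h j hj
    have hsup := mem_attn_iff.1 (h ▸ Finset.mem_singleton_self i)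
    refine (inner_le_iSup_inner j).trans_eq hsup.symm |>.lt_of_ne fun hji => hj ?_
    simpa [h] using mem_attn_iff.2 (hji.trans hsup)
  · intro h
    have : Nonempty (Fin n) := ⟨i⟩
    have hsup : ⨆ ℓ, ⟪z i, z ℓ⟫ = ⟪z i, z i⟫ :=
      le_antisymm (ciSup_le fun j => if hj : j = i then (hj ▸ le_rfl) else (h j hj).le)
        (inner_le_iSup_inner i)
    ext j
    rw [mem_attn_iff, hsup, Finset.mem_singleton]
    exact ⟨fun hj => by_contra fun hji => (h j hji).ne hj, fun hj => hj ▸ rfl⟩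

theorem convexHull_subset_of_attn_eq_singleton (h : attn z i = {i}) :
    convexHull ℝ (Set.range z) ⊆ insert (z i) {y | ⟪z i, y⟫ < ⟪z i, z i⟫} :=
  convexHull_subset_insert_setOf_lt (l := (innerSL ℝ (z i)).toLinearMap) <| by
    rintro _ ⟨j, rfl⟩ hj
    exact attn_eq_singleton_iff.1 h j (ne_of_apply_ne _ hj)

theorem attn_nonempty (z : Fin n → EuclideanSpace ℝ (Fin d)) (i : Fin n) :
    (attn z i).Nonempty := by
  have : Nonempty (Fin n) := ⟨i⟩
  obtain ⟨j, hj⟩ := exists_eq_ciSup_of_finite (f := fun ℓ => ⟪z i, z ℓ⟫)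
  exact ⟨j, mem_attn_iff.2 hj⟩

theorem centerMass_attn_mem_convexHull (z : Fin n → EuclideanSpace ℝ (Fin d)) (i : Fin n) :
    (attn z i).centerMass (fun _ => (1 : ℝ)) z ∈ convexHull ℝ (Set.range z) :=
  (attn z i).centerMass_mem_convexHull (fun _ _ => zero_le_one)
    (by simpa using attn_nonempty z i) fun j _ => Set.mem_range_self j

end Attention

namespace IsDyn

variable {d n : ℕ} {α : ℝ} {z : ℕ → Fin n → EuclideanSpace ℝ (Fin d)} {i : Fin n} {k : ℕ}

theorem succ_eq (hdyn : IsDyn α z) (k : ℕ) (j : Fin n) :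
    z (k + 1) j = (1 - α / (1 + α)) • z k j +
      (α / (1 + α)) • (attn (z k) j).centerMass (fun _ => (1 : ℝ)) (z k) := by
  have hcard : ((attn (z k) j).card : ℝ) ≠ 0 := by
    exact_mod_cast (attn_nonempty (z k) j).card_pos.ne'
  rw [hdyn k j, Finset.centerMass, Finset.sum_sub_distrib, Finset.sum_const, Finset.sum_const,
    ← Nat.cast_smul_eq_nsmul ℝ, nsmul_eq_mul, mul_one, smul_sub, smul_smul,
    inv_mul_cancel₀ hcard]
  simp only [one_smul]
  module

theorem succ_mem_convexHull (hdyn : IsDyn α z) (hα : 0 ≤ α) (k : ℕ) (j : Fin n) :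
    z (k + 1) j ∈ convexHull ℝ (Set.range (z k)) := by
  obtain ⟨hc₀, hc₁⟩ := div_one_add_mem_Ico hα
  rw [hdyn.succ_eq]
  exact convex_convexHull ℝ _ (subset_convexHull ℝ _ (Set.mem_range_self j))
    (centerMass_attn_mem_convexHull (z k) j) (by linarith) hc₀ (by ring)

theorem convexHull_antitone (hdyn : IsDyn α z) (hα : 0 ≤ α) :
    Antitone fun k => convexHull ℝ (Set.range (z k)) :=
  antitone_nat_of_succ_le fun k => convexHull_min (Set.range_subset_iff.2
    (hdyn.succ_mem_convexHull hα k)) (convex_convexHull ℝ _)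

theorem succ_eq_self_of_attn_eq_singleton (hdyn : IsDyn α z) (h : attn (z k) i = {i}) :
    z (k + 1) i = z k i := by
  simp [hdyn k i, h]

theorem attn_succ_eq_singleton (hdyn : IsDyn α z) (hα : 0 ≤ α) (h : attn (z k) i = {i}) :
    attn (z (k + 1)) i = {i} := by
  set x := z k i
  refine attn_eq_singleton_iff.2 fun j hj => ?_
  obtain ⟨hc₀, hc₁⟩ := div_one_add_mem_Ico hα
  have hm : ⟪x, (attn (z k) j).centerMass (fun _ => (1 : ℝ)) (z k)⟫ ≤ ⟪x, x⟫ :=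
    le_of_mem_insert_setOf_lt (f := (innerSL ℝ x : _ → ℝ))
      (convexHull_subset_of_attn_eq_singleton h (centerMass_attn_mem_convexHull (z k) j))
  rw [hdyn.succ_eq_self_of_attn_eq_singleton h, hdyn.succ_eq, inner_add_right,
    real_inner_smul_right, real_inner_smul_right]
  nlinarith [attn_eq_singleton_iff.1 h j hj]

theorem eq_of_attn_eq_singleton (hdyn : IsDyn α z) (hα : 0 ≤ α) (h : attn (z k) i = {i})
    {ℓ : ℕ} (hℓ : k ≤ ℓ) : z ℓ i = z k i := by
  suffices z ℓ i = z k i ∧ attn (z ℓ) i = {i} from this.1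
  induction ℓ, hℓ using Nat.le_induction with
  | base => exact ⟨rfl, h⟩
  | succ ℓ _ ih =>
    exact ⟨(hdyn.succ_eq_self_of_attn_eq_singleton ih.2).trans ih.1,
      hdyn.attn_succ_eq_singleton hα ih.2⟩

theorem mem_limitK_of_eventually_eq (hdyn : IsDyn α z) (hα : 0 ≤ α)
    (h : ∀ ℓ, k ≤ ℓ → z ℓ i = z k i) : z k i ∈ limitK z := by
  refine Set.mem_iInter.2 fun ℓ => ?_
  rcases le_total k ℓ with hkℓ | hℓk
  · exact h ℓ hkℓ ▸ subset_convexHull ℝ _ (Set.mem_range_self i)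
  · exact hdyn.convexHull_antitone hα hℓk (subset_convexHull ℝ _ (Set.mem_range_self i))

end IsDyn

theorem leader_converges_to_vertex_general {d n : ℕ} (α : ℝ) (hα : 0 < α)
    (z : ℕ → Fin n → EuclideanSpace ℝ (Fin d)) (hdyn : IsDyn α z)
    (i : Fin n) (hleader : ∃ k : ℕ, attn (z k) i = {i}) :
    ∃ k : ℕ, (∀ ℓ : ℕ, k ≤ ℓ → z ℓ i = z k i) ∧
      z k i ∈ Set.extremePoints ℝ (limitK z) := by
  obtain ⟨k, hk⟩ := hleader
  have hfix : ∀ ℓ, k ≤ ℓ → z ℓ i = z k i := fun ℓ => hdyn.eq_of_attn_eq_singleton hα.le hk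
  refine ⟨k, hfix, ?_⟩
  exact mem_extremePoints_of_subset_insert_setOf_lt (l := (innerSL ℝ (z k i)).toLinearMap)
    (hdyn.mem_limitK_of_eventually_eq hα.le hfix)
    ((Set.iInter_subset _ k).trans (convexHull_subset_of_attn_eq_singleton hk))

/-- Every leader converges in finite time to a vertex (extreme point) of `K`. -/
theorem leader_converges_to_vertex {d n : ℕ} (hd : 0 < d) (hn : 0 < n) (α : ℝ) (hα : 0 < α)
    (z : ℕ → Fin n → EuclideanSpace ℝ (Fin d)) (hdyn : IsDyn α z)
    (hdist : ∀ i j : Fin n, i ≠ j → z 0 i ≠ z 0 j) (hnz : ∀ i, z 0 i ≠ 0)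
    (i : Fin n) (hleader : ∃ k : ℕ, attn (z k) i = {i}) :
    ∃ k : ℕ, (∀ ℓ : ℕ, k ≤ ℓ → z ℓ i = z k i) ∧
      z k i ∈ Set.extremePoints ℝ (limitK z) :=
  leader_converges_to_vertex_general α hα z hdyn i hleader

end
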